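/- arXiv:2501.01440 — 2 statements merged into one kernel-verified Lean document; each statement's English description precedes it below -/
import Mathlib

section
/- If G is a transitive subgroup of S₅ whose Sylow 5-subgroup is not normal in G, then G = A₅ or G = S₅. -/
open Equiv

private lemma sylow_count_aux (n : ℕ) (h1 : n ∣ 24) (h2 : n % 5 = 1) (h3 : n ≠ 1) : n = 6 := by
  have hle : n ≤ 24 := Nat.le_of_dvd (by norm_num) h1
  interval_cases n <;> omega

/-- If `G` is a transitive subgroup of `S₅` whose Sylow 5-subgroup is not normal in `G`,
then `G = A₅` or `G = S₅`. -/
theorem transitive_subgroup_S5_sylow_not_normal (G : Subgroup (Equiv.Perm (Fin 5)))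
    (htrans : ∀ i j : Fin 5, ∃ g ∈ G, g i = j)
    (hP : ∃ P : Sylow 5 G, ¬ (P : Subgroup G).Normal) :
    G = alternatingGroup (Fin 5) ∨ G = ⊤ := by
  classical
  have hp5 : Fact (Nat.Prime 5) := ⟨by norm_num⟩
  -- card of S5
  have hS5 : Nat.card (Perm (Fin 5)) = 120 := by
    rw [Nat.card_eq_fintype_card, Fintype.card_perm, Fintype.card_fin]; rfl
  have hGmul : Nat.card G * G.index = 120 := by
    rw [Subgroup.card_mul_index, hS5]
  have hGpos : 0 < Nat.card G := Nat.card_pos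
  have hGdvd : Nat.card G ∣ 120 := ⟨G.index, hGmul.symm⟩
  -- 5 ∣ card G (transitivity)
  have h5 : 5 ∣ Nat.card G := by
    have horb : MulAction.orbit G (0 : Fin 5) = Set.univ := by
      ext j
      simp only [Set.mem_univ, iff_true]
      obtain ⟨g, hg, hgj⟩ := htrans 0 j
      exact ⟨⟨g, hg⟩, hgj⟩
    have h := MulAction.card_orbit_mul_card_stabilizer_eq_card_group G (0 : Fin 5)
    simp only [← Nat.card_eq_fintype_card] at h
    have h5' : Nat.card (MulAction.orbit G (0 : Fin 5)) = 5 := by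
      rw [horb, Nat.card_univ, Nat.card_eq_fintype_card, Fintype.card_fin]
    rw [h5'] at h
    exact ⟨_, h.symm⟩
  obtain ⟨P, hPn⟩ := hP
  -- card P = 5
  have hfact : (Nat.card G).factorization 5 = 1 := by
    have h1 : 1 ≤ (Nat.card G).factorization 5 :=
      (Nat.Prime.pow_dvd_iff_le_factorization (by norm_num) hGpos.ne').mp (by simpa using h5)
    have h2 : ¬ (2 ≤ (Nat.card G).factorization 5) := by
      intro h2
      have : (5:ℕ)^2 ∣ Nat.card G :=
        (Nat.Prime.pow_dvd_iff_le_factorization (by norm_num) hGpos.ne').mpr h2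
      have h25 : (25:ℕ) ∣ Nat.card G := (show (25:ℕ) = 5^2 by norm_num) ▸ this
      have h120 := h25.trans hGdvd
      norm_num at h120
    omega
  have hPcard : Nat.card P = 5 := by
    rw [P.card_eq_multiplicity, hfact, pow_one]
  have hPmul : 5 * (P : Subgroup G).index = Nat.card G := by
    have h := Subgroup.card_mul_index (P : Subgroup G)
    rw [hPcard] at h; exact h
  have hPidx24 : (P : Subgroup G).index ∣ 24 := by
    have : 5 * (P : Subgroup G).index ∣ 5 * 24 := by
      rw [hPmul]; exact hGdvd.trans (by norm_num)
    exact (mul_dvd_mul_iff_left (by norm_num : (5:ℕ) ≠ 0)).mp this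
  -- number of Sylow subgroups
  set n := Nat.card (Sylow 5 G) with hn
  have hmod : n % 5 = 1 := card_sylow_modEq_one 5 G
  have hndvd : n ∣ (P : Subgroup G).index := P.card_dvd_index
  have hne1 : n ≠ 1 := by
    intro h1
    apply hPn
    have := P.card_eq_index_normalizer
    rw [← hn, h1] at this
    have := Subgroup.index_eq_one.mp this.symm
    exact Subgroup.normalizer_eq_top_iff.mp this
  have hn6 : n = 6 := by
    exact sylow_count_aux n (hndvd.trans hPidx24) hmod hne1
  -- card G ≥ 30
  have h30 : 30 ≤ Nat.card G := by
    rw [← hPmul]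
    have : 6 ≤ (P : Subgroup G).index := hn6 ▸ Nat.le_of_dvd (by
      rcases Nat.eq_zero_or_pos (P : Subgroup G).index with h | h
      · exfalso; rw [h, mul_zero] at hPmul; omega
      · exact h) hndvd
    omega
  -- index G ≤ 4
  have hidx4 : G.index ≤ 4 := by
    by_contra hc
    push_neg at hc
    have : 30 * 5 ≤ Nat.card G * G.index :=
      Nat.mul_le_mul h30 hc
    omega
  -- normal core
  set K := G.normalCore with hK
  have hKle : K ≤ G := Subgroup.normalCore_le G
  have hKnormal : K.Normal := Subgroup.normalCore_normal G
  have hKidx : K.index ∣ Nat.factorial G.index := by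
    rw [hK, Subgroup.normalCore_eq_ker, Subgroup.index_ker]
    have h1 : Nat.card (MulAction.toPermHom (Perm (Fin 5)) (Perm (Fin 5) ⧸ G)).range
        ∣ Nat.card (Perm (Perm (Fin 5) ⧸ G)) := Subgroup.card_subgroup_dvd_card _
    have h2 : Nat.card (Perm (Perm (Fin 5) ⧸ G)) = Nat.factorial G.index := by
      rw [Nat.card_eq_fintype_card, Fintype.card_perm, ← Nat.card_eq_fintype_card]
      rfl
    rwa [h2] at h1
  have hKidx24 : K.index ≤ 24 := by
    have hfle : Nat.factorial G.index ≤ 24 :=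
      (Nat.factorial_le hidx4).trans (by decide)
    have : Nat.factorial G.index ≠ 0 := Nat.factorial_ne_zero _
    exact (Nat.le_of_dvd (by omega) hKidx).trans hfle
  have hKne : K ≠ ⊥ := by
    intro hbot
    rw [hbot, Subgroup.index_bot, hS5] at hKidx24
    omega
  have hKmul : Nat.card K * K.index = 120 := by
    rw [Subgroup.card_mul_index, hS5]
  -- K ⊓ A₅
  rcases IsSimpleGroup.eq_bot_or_eq_top_of_normal (K.subgroupOf (alternatingGroup (Fin 5)))
      (hKnormal.subgroupOf _) with hcase | hcase
  · -- disjoint case : contradiction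
    exfalso
    have hdisj : Disjoint K (alternatingGroup (Fin 5)) :=
      Subgroup.subgroupOf_eq_bot.mp hcase
    have hinj : Function.Injective ((Perm.sign.comp K.subtype)) := by
      rw [← MonoidHom.ker_eq_bot_iff]
      rw [eq_bot_iff]
      intro x hx
      have hx1 : (x : Perm (Fin 5)) ∈ alternatingGroup (Fin 5) := by
        simpa [Perm.mem_alternatingGroup] using hx
      have : (x : Perm (Fin 5)) ∈ K ⊓ alternatingGroup (Fin 5) := ⟨x.2, hx1⟩
      rw [hdisj.eq_bot] at this
      rw [Subgroup.mem_bot] at this ⊢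
      exact Subtype.ext this
    have hcard2 : Nat.card K ≤ 2 := by
      have := Nat.card_le_card_of_injective _ hinj
      simpa [Nat.card_eq_fintype_card, Fintype.card_units_int] using this
    have : Nat.card K * K.index ≤ 2 * 24 := Nat.mul_le_mul hcard2 hKidx24
    omega
  · -- A₅ ≤ K ≤ G
    have hAle : alternatingGroup (Fin 5) ≤ G :=
      (Subgroup.subgroupOf_eq_top.mp hcase).trans hKle
    have hA2 : 2 * Nat.card (alternatingGroup (Fin 5)) = 120 := by
      rw [Nat.card_eq_fintype_card, two_mul_card_alternatingGroup,
        ← Nat.card_eq_fintype_card, hS5]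
    have hcardA : Nat.card (alternatingGroup (Fin 5)) = 60 := by omega
    have hAidx : (alternatingGroup (Fin 5)).index = 2 := by
      have h3 : Nat.card (alternatingGroup (Fin 5)) * (alternatingGroup (Fin 5)).index = 120 := by
        rw [Subgroup.card_mul_index, hS5]
      rw [hcardA] at h3
      omega
    have hGidx : G.index ∣ 2 := hAidx ▸ Subgroup.index_dvd_of_le hAle
    rcases (Nat.dvd_prime Nat.prime_two).mp hGidx with h1 | h2
    · right
      exact Subgroup.index_eq_one.mp h1
    · left
      rw [h2] at hGmul
      exact (Subgroup.eq_of_le_of_card_ge hAle (by omega)).symm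
end

section
/- With σ : F → F' an isomorphism, f ∈ F[x], K and K' splitting fields of f and σ(f): for any root α ∈ K of f and any root α' ∈ K' of σ(min(α, F, x)), there exists an isomorphism τ : K → K' extending σ with τ(α) = α'. -/
open Polynomial

/-! Viewed as an `F`-algebra through `σ`, `K'` is a splitting field of `f` itself, so uniqueness of
splitting fields gives some `e : K ≃ₐ[F] K'`. Then `e α` and `α'` are roots of the same irreducible
polynomial `min(α, F, x)` in the normal extension `K'/F`, hence conjugate under `Gal(K'/F)`;
composing `e` with that automorphism gives `τ`. -/

namespace Polynomial.IsSplittingField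

theorem of_map_ringEquiv {F F' L : Type*} [Field F] [Field F'] [Field L] [Algebra F L]
    [Algebra F' L] (σ : F ≃+* F') (h : algebraMap F L = (algebraMap F' L).comp σ) (f : F[X])
    [IsSplittingField F' L (f.map (σ : F →+* F'))] : IsSplittingField F L f := by
  have hmap : f.map (algebraMap F L) = (f.map (σ : F →+* F')).map (algebraMap F' L) := by
    rw [h, map_map]
  have hrange : Set.range (algebraMap F L) = Set.range (algebraMap F' L) := by
    rw [h, RingHom.coe_comp, RingEquiv.coe_toRingHom, EquivLike.range_comp]
  have hroots : f.rootSet L = (f.map (σ : F →+* F')).rootSet L := by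
    rw [rootSet, aroots, hmap, rootSet, aroots]
  refine ⟨hmap ▸ splits L (f.map (σ : F →+* F')), ?_⟩
  apply Subalgebra.toSubring_injective
  rw [Algebra.adjoin_eq_ring_closure, hrange, hroots, ← Algebra.adjoin_eq_ring_closure,
    adjoin_rootSet, Algebra.top_toSubring, Algebra.top_toSubring]

theorem exists_algEquiv_apply_eq {F K K' : Type*} [Field F] [Field K] [Field K'] [Algebra F K]
    [Algebra F K'] (f : F[X]) [IsSplittingField F K f] [IsSplittingField F K' f] (α : K)
    {α' : K'} (hα' : aeval α' (minpoly F α) = 0) : ∃ τ : K ≃ₐ[F] K', τ α = α' := by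
  let e : K ≃ₐ[F] K' := (algEquiv K f).trans (algEquiv K' f).symm
  have : Normal F K' := Normal.of_isSplittingField f
  obtain ⟨g, hg⟩ := minpoly.exists_algEquiv_of_root' (Algebra.IsAlgebraic.isAlgebraic (e α))
    (by rwa [minpoly.algEquiv_eq])
  exact ⟨e.trans g, hg⟩

end Polynomial.IsSplittingField

theorem isomorphism_extension_theorem_root_general {F F' : Type*} [Field F] [Field F']
    (σ : F ≃+* F') (f : Polynomial F)
    (K K' : Type*) [Field K] [Field K'] [Algebra F K] [Algebra F' K']
    [IsSplittingField F K f] [IsSplittingField F' K' (f.map (σ : F →+* F'))]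
    (α : K)
    (α' : K') (hα' : Polynomial.aeval α' ((minpoly F α).map (σ : F →+* F')) = 0) :
    ∃ τ : K ≃+* K',
      (∀ a : F, τ (algebraMap F K a) = algebraMap F' K' (σ a)) ∧ τ α = α' := by
  let : Algebra F K' := ((algebraMap F' K').comp (σ : F →+* F')).toAlgebra
  have := IsSplittingField.of_map_ringEquiv (L := K') σ rfl f
  rw [aeval_def, eval₂_map] at hα'
  obtain ⟨τ, hτ⟩ := IsSplittingField.exists_algEquiv_apply_eq f α hα'
  exact ⟨τ.toRingEquiv, τ.commutes, hτ⟩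

/-- With `σ : F → F'` a field isomorphism, `f ∈ F[x]`, and `K`, `K'` splitting fields of
`f` and `σ(f)`: for any root `α ∈ K` of `f` and any root `α' ∈ K'` of
`σ(min(α, F, x))`, there exists an isomorphism `τ : K → K'` extending `σ` with
`τ(α) = α'`. -/
theorem isomorphism_extension_theorem_root {F F' : Type*} [Field F] [Field F']
    (σ : F ≃+* F') (f : Polynomial F)
    (K K' : Type*) [Field K] [Field K'] [Algebra F K] [Algebra F' K']
    [IsSplittingField F K f] [IsSplittingField F' K' (f.map (σ : F →+* F'))]
    (α : K) (hα : Polynomial.aeval α f = 0)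
    (α' : K') (hα' : Polynomial.aeval α' ((minpoly F α).map (σ : F →+* F')) = 0) :
    ∃ τ : K ≃+* K',
      (∀ a : F, τ (algebraMap F K a) = algebraMap F' K' (σ a)) ∧ τ α = α' :=
  isomorphism_extension_theorem_root_general σ f K K' α α' hα'
end
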